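/- arXiv:2310.07363 — 4 statements merged into one kernel-verified Lean document; each statement's English description precedes it below -/
import Mathlib

section
/- Let σ be a real number with |σ − γ| ≤ √(α²+β²), and let θ₁ = arccos((σ−γ)/(−√(α²+β²))) − φ₀ and θ₂ = −arccos((σ−γ)/(−√(α²+β²))) − φ₀. Then θ₁ ∈ [0, π/2] if and only if −√(α²+β²) ≤ σ − γ ≤ β, and θ₂ ∈ [0, π/2] if and only if −√(α²+β²) ≤ σ − γ ≤ α. -/
open Real Set

lemma my_arccos_le_iff {x c : ℝ} (hx1 : -1 ≤ x) (hx2 : x ≤ 1) (hc0 : 0 ≤ c) (hcπ : c ≤ π) :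
    Real.arccos x ≤ c ↔ Real.cos c ≤ x := by
  constructor
  · intro h
    have := Real.cos_le_cos_of_nonneg_of_le_pi (Real.arccos_nonneg x) hcπ h
    rwa [Real.cos_arccos hx1 hx2] at this
  · intro h
    have := Real.strictAntiOn_arccos.antitoneOn
      (Set.mem_Icc.2 ⟨Real.neg_one_le_cos c, Real.cos_le_one c⟩)
      (Set.mem_Icc.2 ⟨hx1, hx2⟩) h
    rwa [Real.arccos_cos hc0 hcπ] at this

/-- membership of the roots `θ₁`, `θ₂` in `[0, π/2]` is characterized by
`−√(α²+β²) ≤ σ−γ ≤ β` and `−√(α²+β²) ≤ σ−γ ≤ α`, respectively. -/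
theorem Mphi_roots_mem_Icc_iff
    (Lx Ly Lz rx0 rx1 ry0 ry1 rz0 rz1 V Kx Ky Kz : ℝ)
    (hLx : 0 < Lx) (hLy : 0 < Ly) (hLz : 0 < Lz)
    (hrx0 : rx0 ∈ Set.Ioo (0 : ℝ) 1) (hrx1 : rx1 ∈ Set.Ioo (0 : ℝ) 1)
    (hry0 : ry0 ∈ Set.Ioo (0 : ℝ) 1) (hry1 : ry1 ∈ Set.Ioo (0 : ℝ) 1)
    (hrz0 : rz0 ∈ Set.Ioo (0 : ℝ) 1) (hrz1 : rz1 ∈ Set.Ioo (0 : ℝ) 1)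
    (hV : V = Lx * Ly * Lz)
    (hKx : Kx = Real.log (rx0 * rx1) / Lx)
    (hKy : Ky = Real.log (ry0 * ry1) / Ly)
    (hKz : Kz = Real.log (rz0 * rz1) / Lz)
    (φ : ℝ) (hφ : φ ∈ Set.Ioc (0 : ℝ) (π / 2))
    (α β γ φ₀ : ℝ)
    (hα : α = Kx * Real.sin φ) (hβ : β = Ky * Real.sin φ) (hγ : γ = Kz * Real.cos φ)
    (hφ₀ : φ₀ = Real.arctan (-Ky / Kx))
    (Mφ : ℝ → ℝ)
    (hMφ : ∀ θ, Mφ θ = -Real.sqrt (α ^ 2 + β ^ 2) * Real.cos (θ + φ₀) + γ)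
    (σ : ℝ) (hσ : |σ - γ| ≤ Real.sqrt (α ^ 2 + β ^ 2)) (θ₁ θ₂ : ℝ)
    (hθ₁ : θ₁ = Real.arccos ((σ - γ) / (-Real.sqrt (α ^ 2 + β ^ 2))) - φ₀)
    (hθ₂ : θ₂ = -Real.arccos ((σ - γ) / (-Real.sqrt (α ^ 2 + β ^ 2))) - φ₀) :
    (θ₁ ∈ Set.Icc (0 : ℝ) (π / 2) ↔
        -Real.sqrt (α ^ 2 + β ^ 2) ≤ σ - γ ∧ σ - γ ≤ β) ∧
      (θ₂ ∈ Set.Icc (0 : ℝ) (π / 2) ↔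
        -Real.sqrt (α ^ 2 + β ^ 2) ≤ σ - γ ∧ σ - γ ≤ α) := by
  have hKxneg : Kx < 0 := by
    rw [hKx]
    exact div_neg_of_neg_of_pos
      (Real.log_neg (mul_pos hrx0.1 hrx1.1) (by nlinarith [hrx0.1.le, hrx1.1.le, hrx0.2, hrx1.2])) hLx
  have hKyneg : Ky < 0 := by
    rw [hKy]
    exact div_neg_of_neg_of_pos
      (Real.log_neg (mul_pos hry0.1 hry1.1) (by nlinarith [hry0.1.le, hry1.1.le, hry0.2, hry1.2])) hLy
  have hsin : 0 < Real.sin φ :=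
    Real.sin_pos_of_pos_of_lt_pi hφ.1 (lt_of_le_of_lt hφ.2 (by linarith [Real.pi_pos]))
  set S := Real.sqrt (Kx ^ 2 + Ky ^ 2) with hSdef
  have hSpos : 0 < S := Real.sqrt_pos.2 (by nlinarith [sq_nonneg Ky])
  set R := Real.sqrt (α ^ 2 + β ^ 2) with hRdef
  have hR : R = Real.sin φ * S := by
    rw [hRdef, hSdef, hα, hβ, show (Kx * Real.sin φ) ^ 2 + (Ky * Real.sin φ) ^ 2
        = Real.sin φ ^ 2 * (Kx ^ 2 + Ky ^ 2) by ring,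
      Real.sqrt_mul (sq_nonneg _), Real.sqrt_sq hsin.le]
  have hRpos : 0 < R := by rw [hR]; exact mul_pos hsin hSpos
  -- cos φ₀ and sin φ₀
  have hsq : Real.sqrt (1 + (-Ky / Kx) ^ 2) = S / (-Kx) := by
    have h1 : 1 + (-Ky / Kx) ^ 2 = (Kx ^ 2 + Ky ^ 2) / (-Kx) ^ 2 := by
      field_simp [hKxneg.ne]
    rw [h1, Real.sqrt_div' _ (by positivity), Real.sqrt_sq (by linarith), hSdef]
  have hcos0 : Real.cos φ₀ = -Kx / S := by
    rw [hφ₀, Real.cos_arctan, hsq]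
    field_simp
  have hsin0 : Real.sin φ₀ = Ky / S := by
    rw [hφ₀, Real.sin_arctan, hsq]
    field_simp [hKxneg.ne, hSpos.ne']
  have hβR : β = R * Real.sin φ₀ := by
    rw [hβ, hsin0, hR]; field_simp
  have hαR : α = -(R * Real.cos φ₀) := by
    rw [hα, hcos0, hR]; field_simp
  -- bounds on φ₀
  have hφ₀neg : φ₀ < 0 := by
    have h : 0 < Ky / Kx := div_pos_of_neg_of_neg hKyneg hKxneg
    rw [hφ₀, show -Ky / Kx = -(Ky / Kx) by ring, Real.arctan_neg, neg_lt_zero, ← Real.arctan_zero]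
    exact Real.arctan_strictMono h
  have hφ₀gt : -(π / 2) < φ₀ := hφ₀ ▸ Real.neg_pi_div_two_lt_arctan _
  -- x bounds
  set x := (σ - γ) / (-R) with hxdef
  have hx1 : -1 ≤ x := by
    rw [hxdef, le_div_iff_of_neg (by linarith)]
    have := abs_le.1 hσ
    linarith [this.2]
  have hx2 : x ≤ 1 := by
    rw [hxdef, div_le_iff_of_neg (by linarith)]
    have := abs_le.1 hσ
    linarith [this.1]
  have hlow : -R ≤ σ - γ := (abs_le.1 hσ).1
  set A := Real.arccos x with hAdef
  have hA0 : 0 ≤ A := Real.arccos_nonneg x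
  have hAπ : A ≤ π := Real.arccos_le_pi x
  constructor
  · -- θ₁
    rw [hθ₁, Set.mem_Icc]
    constructor
    · rintro ⟨-, h2⟩
      refine ⟨hlow, ?_⟩
      have hc : A ≤ π / 2 + φ₀ := by linarith
      have := (my_arccos_le_iff hx1 hx2 (by linarith) (by linarith [Real.pi_pos])).1 hc
      rw [show π / 2 + φ₀ = π / 2 - (-φ₀) by ring, Real.cos_pi_div_two_sub, Real.sin_neg] at this
      have : σ - γ ≤ -Real.sin φ₀ * -R := (le_div_iff_of_neg (by linarith : -R < 0)).1 this
      rw [hβR]; linarith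
    · rintro ⟨-, h2⟩
      have hxx : Real.cos (π / 2 + φ₀) ≤ x := by
        rw [show π / 2 + φ₀ = π / 2 - (-φ₀) by ring, Real.cos_pi_div_two_sub, Real.sin_neg,
          hxdef, le_div_iff_of_neg (by linarith : -R < 0)]
        rw [hβR] at h2; linarith
      have := (my_arccos_le_iff hx1 hx2 (by linarith) (by linarith [Real.pi_pos])).2 hxx
      constructor <;> linarith
  · -- θ₂
    rw [hθ₂, Set.mem_Icc]
    constructor
    · rintro ⟨h1, -⟩
      refine ⟨hlow, ?_⟩
      have hc : A ≤ -φ₀ := by linarith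
      have := (my_arccos_le_iff hx1 hx2 (by linarith) (by linarith [Real.pi_pos])).1 hc
      rw [Real.cos_neg] at this
      have : σ - γ ≤ Real.cos φ₀ * -R := (le_div_iff_of_neg (by linarith : -R < 0)).1 this
      rw [hαR]; linarith
    · rintro ⟨-, h2⟩
      have hxx : Real.cos (-φ₀) ≤ x := by
        rw [Real.cos_neg, hxdef, le_div_iff_of_neg (by linarith : -R < 0)]
        rw [hαR] at h2; linarith
      have := (my_arccos_le_iff hx1 hx2 (by linarith) (by linarith [Real.pi_pos])).2 hxx
      constructor <;> linarith
end

section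
/- (Lemma 1, Dirac-free formulation.) Fix a polar angle φ ∈ (0, π/2] and assume α ≠ β or α < 0. For every continuous function g : ℝ → ℝ, the change-of-variables identity ∫_{0}^{π/2} g(M_φ(θ)) dθ = ∫_{ℝ} g(σ) · μ_φ(σ − γ) / √(α²+β² − (σ−γ)²) dσ holds, where the integrand on the right-hand side is interpreted as 0 whenever μ_φ(σ − γ) = 0. -/
/-!
Write `R = √(α² + β²)`. Since `α, β < 0`, the phase `φ₀ = arctan (β / -α)` lies in `[-π/2, 0]` and
satisfies `R cos φ₀ = -α`, `R sin φ₀ = β`, so `M_φ θ = γ - R cos (θ + φ₀)`. After the shift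
`t = θ + φ₀` the angle range `[φ₀, φ₀ + π/2]` splits at `0`; reflecting the negative part, both
pieces are arcs `[0, c]` with `c ≤ π` on which `t ↦ γ - R cos t` increases with Jacobian
`R sin t = √(R² - (σ - γ)²)`. The substitution `σ = γ - R cos t` then produces the two indicator
terms of `μ_φ`, with upper endpoints `γ + α` and `γ + β`.
-/

open Real Set MeasureTheory

theorem Real.log_mul_neg_of_mem_Ioo {r₀ r₁ : ℝ} (hr₀ : r₀ ∈ Ioo 0 1) (hr₁ : r₁ ∈ Ioo 0 1) :
    log (r₀ * r₁) < 0 :=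
  log_neg (mul_pos hr₀.1 hr₁.1) (mul_lt_one_of_nonneg_of_lt_one_left hr₀.1.le hr₀.2 hr₁.2.le)

theorem Real.sqrt_sq_add_sq_mul_cos_arctan_div {a : ℝ} (ha : 0 < a) (b : ℝ) :
    √(a ^ 2 + b ^ 2) * cos (arctan (b / a)) = a := by
  have hroot : √(1 + (b / a) ^ 2) = √(a ^ 2 + b ^ 2) / a := by
    have : 1 + (b / a) ^ 2 = (a ^ 2 + b ^ 2) / a ^ 2 := by field_simp
    rw [this, sqrt_div' _ (sq_nonneg a), sqrt_sq ha.le]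
  rw [cos_arctan, hroot]
  have : 0 < √(a ^ 2 + b ^ 2) := by positivity
  field_simp

theorem Real.sqrt_sq_add_sq_mul_sin_arctan_div {a : ℝ} (ha : 0 < a) (b : ℝ) :
    √(a ^ 2 + b ^ 2) * sin (arctan (b / a)) = b := by
  have hcos := sqrt_sq_add_sq_mul_cos_arctan_div ha b
  rw [← tan_mul_cos (cos_arctan_pos _).ne', tan_arctan, mul_left_comm, hcos]
  field_simp

theorem integrableOn_and_intervalIntegral_comp_sub_mul_cos {g : ℝ → ℝ} (hg : Continuous g)
    {R : ℝ} (hR : 0 < R) (γ : ℝ) {c : ℝ} (hc₀ : 0 ≤ c) (hcπ : c ≤ π) :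
    IntegrableOn (fun σ => g σ / √(R ^ 2 - (σ - γ) ^ 2)) (Ioo (γ - R) (γ - R * cos c)) ∧
      ∫ t in 0..c, g (γ - R * cos t) =
        ∫ σ in Ioo (γ - R) (γ - R * cos c), g σ / √(R ^ 2 - (σ - γ) ^ 2) := by
  set M : ℝ → ℝ := fun t => γ - R * cos t with hM
  have hMcont : Continuous M := by fun_prop
  have hMderiv (t : ℝ) : HasDerivWithinAt M (R * sin t) (Ioo 0 c) t := by
    simpa using ((hasDerivAt_cos t).const_mul R).const_sub γ |>.hasDerivWithinAt
  have hMmono : StrictMonoOn M (Icc 0 c) := fun s hs t ht hst =>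
    sub_lt_sub_left (mul_lt_mul_of_pos_left
      (strictAntiOn_cos ⟨hs.1, hs.2.trans hcπ⟩ ⟨ht.1, ht.2.trans hcπ⟩ hst) hR) γ
  have himage : M '' Ioo 0 c = Ioo (γ - R) (γ - R * cos c) := by
    rw [hMcont.continuousOn.image_Ioo_of_strictMonoOn hc₀ hMmono]
    simp [hM]
  have hjac : ∀ t ∈ Ioo 0 c, |R * sin t| • (g (M t) / √(R ^ 2 - (M t - γ) ^ 2)) = g (M t) := by
    intro t ht
    have hsint : 0 < sin t := sin_pos_of_pos_of_lt_pi ht.1 (ht.2.trans_le hcπ)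
    have hsin : 0 < R * sin t := mul_pos hR hsint
    have hsqrt : √(R ^ 2 - (M t - γ) ^ 2) = R * sin t := by
      rw [← sqrt_sq hsin.le]
      congr 1
      linear_combination (-R ^ 2) * sin_sq_add_cos_sq t
    rw [smul_eq_mul, hsqrt, abs_of_pos hsin, mul_div_cancel₀ _ hsin.ne']
  have hinj : InjOn M (Ioo 0 c) := hMmono.injOn.mono Ioo_subset_Icc_self
  rw [← himage, intervalIntegral.integral_of_le hc₀, integral_Ioc_eq_integral_Ioo,
    integral_image_eq_integral_abs_deriv_smul measurableSet_Ioo (fun t _ => hMderiv t) hinj,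
    integrableOn_image_iff_integrableOn_abs_deriv_smul measurableSet_Ioo
      (fun t _ => hMderiv t) hinj]
  exact ⟨((hg.comp hMcont).integrableOn_Icc.mono_set Ioo_subset_Icc_self).congr_fun
      (fun t ht => (hjac t ht).symm) measurableSet_Ioo,
    (setIntegral_congr_fun measurableSet_Ioo hjac).symm⟩

theorem integral_indicator_Icc_add_indicator_Icc {f : ℝ → ℝ} {a b c : ℝ}
    (hb : IntegrableOn f (Ioo a b)) (hc : IntegrableOn f (Ioo a c)) :
    ∫ σ, ((Icc a b).indicator f σ + (Icc a c).indicator f σ) =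
      (∫ σ in Ioo a b, f σ) + ∫ σ in Ioo a c, f σ := by
  rw [integral_add ((integrable_indicator_iff measurableSet_Icc).2
      ((integrableOn_Icc_iff_integrableOn_Ioo).2 hb))
    ((integrable_indicator_iff measurableSet_Icc).2 ((integrableOn_Icc_iff_integrableOn_Ioo).2 hc)),
    integral_indicator measurableSet_Icc, integral_indicator measurableSet_Icc,
    integral_Icc_eq_integral_Ioo, integral_Icc_eq_integral_Ioo]

theorem intervalIntegral_comp_sub_mul_cos_add_eq_integral_indicator {g : ℝ → ℝ} (hg : Continuous g)
    {R : ℝ} (hR : 0 < R) (γ : ℝ) {φ₀ : ℝ} (hφ₀ : -(π / 2) ≤ φ₀) (hφ₀' : φ₀ ≤ 0) :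
    ∫ θ in 0..π / 2, g (γ - R * cos (θ + φ₀)) =
      ∫ σ, g σ * ((Icc (-R) (R * sin φ₀)).indicator (fun _ => (1 : ℝ)) (σ - γ) +
        (Icc (-R) (-(R * cos φ₀))).indicator (fun _ => (1 : ℝ)) (σ - γ)) /
          √(R ^ 2 - (σ - γ) ^ 2) := by
  set f : ℝ → ℝ := fun σ => g σ / √(R ^ 2 - (σ - γ) ^ 2)
  obtain ⟨hint₁, heq₁⟩ := integrableOn_and_intervalIntegral_comp_sub_mul_cos hg hR γ
    (c := -φ₀) (by linarith) (by linarith [pi_pos])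
  obtain ⟨hint₂, heq₂⟩ := integrableOn_and_intervalIntegral_comp_sub_mul_cos hg hR γ
    (c := φ₀ + π / 2) (by linarith) (by linarith [pi_pos])
  rw [cos_neg] at hint₁ heq₁
  rw [cos_add_pi_div_two, mul_neg, sub_neg_eq_add] at hint₂ heq₂
  have hind (σ : ℝ) : g σ * ((Icc (-R) (R * sin φ₀)).indicator (fun _ => (1 : ℝ)) (σ - γ) +
      (Icc (-R) (-(R * cos φ₀))).indicator (fun _ => (1 : ℝ)) (σ - γ)) / √(R ^ 2 - (σ - γ) ^ 2) =
      (Icc (γ - R) (γ + R * sin φ₀)).indicator f σ +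
        (Icc (γ - R) (γ - R * cos φ₀)).indicator f σ := by
    have hmem (a b : ℝ) : σ - γ ∈ Icc a b ↔ σ ∈ Icc (γ + a) (γ + b) := by
      simp only [mem_Icc]
      constructor <;> rintro ⟨h₁, h₂⟩ <;> constructor <;> linarith
    simp only [indicator_apply, hmem, f, ← sub_eq_add_neg]
    split_ifs <;> ring
  have hcos_even : ∫ t in φ₀..0, g (γ - R * cos t) = ∫ t in 0..-φ₀, g (γ - R * cos t) := by
    simpa using (intervalIntegral.integral_comp_neg (fun t => g (γ - R * cos t)) (a := 0)
      (b := -φ₀)).symm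
  calc ∫ θ in 0..π / 2, g (γ - R * cos (θ + φ₀))
      = ∫ t in φ₀..φ₀ + π / 2, g (γ - R * cos t) := by
        rw [intervalIntegral.integral_comp_add_right (fun t => g (γ - R * cos t)), zero_add,
          add_comm]
    _ = (∫ t in 0..-φ₀, g (γ - R * cos t)) + ∫ t in 0..φ₀ + π / 2, g (γ - R * cos t) := by
        rw [← hcos_even, intervalIntegral.integral_add_adjacent_intervals]
        all_goals exact (hg.comp (by fun_prop)).intervalIntegrable _ _
    _ = _ := by
        rw [heq₁, heq₂, add_comm, ← integral_indicator_Icc_add_indicator_Icc hint₂ hint₁]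
        simp only [hind, f]

theorem horizontal_damping_density_change_of_variables_general
    (Lx Ly rx0 rx1 ry0 ry1 Kx Ky : ℝ)
    (hLx : 0 < Lx) (hLy : 0 < Ly)
    (hrx0 : rx0 ∈ Set.Ioo (0 : ℝ) 1) (hrx1 : rx1 ∈ Set.Ioo (0 : ℝ) 1)
    (hry0 : ry0 ∈ Set.Ioo (0 : ℝ) 1) (hry1 : ry1 ∈ Set.Ioo (0 : ℝ) 1)
    (hKx : Kx = Real.log (rx0 * rx1) / Lx)
    (hKy : Ky = Real.log (ry0 * ry1) / Ly)
    (φ : ℝ) (hφ : φ ∈ Set.Ioc (0 : ℝ) (π / 2))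
    (α β γ φ₀ : ℝ)
    (hα : α = Kx * Real.sin φ) (hβ : β = Ky * Real.sin φ)
    (hφ₀ : φ₀ = Real.arctan (-Ky / Kx))
    (Mφ : ℝ → ℝ)
    (hMφ : ∀ θ, Mφ θ = -Real.sqrt (α ^ 2 + β ^ 2) * Real.cos (θ + φ₀) + γ)
    (μφ : ℝ → ℝ)
    (hμφ : ∀ x, μφ x =
      Set.indicator (Set.Icc (-Real.sqrt (α ^ 2 + β ^ 2)) β) (fun _ => (1 : ℝ)) x +
        Set.indicator (Set.Icc (-Real.sqrt (α ^ 2 + β ^ 2)) α) (fun _ => (1 : ℝ)) x) :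
    ∀ g : ℝ → ℝ, Continuous g →
      (∫ θ in (0 : ℝ)..(π / 2), g (Mφ θ)) =
        ∫ σ : ℝ, g σ * μφ (σ - γ) / Real.sqrt (α ^ 2 + β ^ 2 - (σ - γ) ^ 2) := by
  intro g hg
  have hsin : 0 < sin φ := sin_pos_of_pos_of_lt_pi hφ.1 (hφ.2.trans_lt (by linarith [pi_pos]))
  have hα₀ : 0 < -α := by
    rw [hα, hKx, neg_pos]
    exact mul_neg_of_neg_of_pos (div_neg_of_neg_of_pos (log_mul_neg_of_mem_Ioo hrx0 hrx1) hLx) hsin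
  have hβ₀ : β < 0 := by
    rw [hβ, hKy]
    exact mul_neg_of_neg_of_pos (div_neg_of_neg_of_pos (log_mul_neg_of_mem_Ioo hry0 hry1) hLy) hsin
  have hφ₀_eq : φ₀ = arctan (β / -α) := by
    rw [hφ₀, hα, hβ, ← neg_mul, mul_div_mul_right _ _ hsin.ne', div_neg, neg_div]
  set R := √(α ^ 2 + β ^ 2)
  have hR : 0 < R := sqrt_pos.2 (by nlinarith)
  have hRcos : R * cos φ₀ = -α := by
    simpa [hφ₀_eq, neg_sq] using sqrt_sq_add_sq_mul_cos_arctan_div hα₀ β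
  have hRsin : R * sin φ₀ = β := by
    simpa [hφ₀_eq, neg_sq] using sqrt_sq_add_sq_mul_sin_arctan_div hα₀ β
  have hφ₀_lower : -(π / 2) ≤ φ₀ := hφ₀_eq ▸ (neg_pi_div_two_lt_arctan _).le
  have hφ₀_upper : φ₀ ≤ 0 := hφ₀_eq ▸ (arctan_lt_zero.2 (div_neg_of_neg_of_pos hβ₀ hα₀)).le
  have hM (θ : ℝ) : Mφ θ = γ - R * cos (θ + φ₀) := by rw [hMφ]; ring
  have hμ (x : ℝ) : μφ x = (Icc (-R) (R * sin φ₀)).indicator (fun _ => (1 : ℝ)) x +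
      (Icc (-R) (-(R * cos φ₀))).indicator (fun _ => (1 : ℝ)) x := by
    rw [hRsin, hRcos, neg_neg, hμφ]
  have hR_sq : α ^ 2 + β ^ 2 = R ^ 2 := (sq_sqrt (by positivity)).symm
  simp only [hM, hμ, hR_sq]
  exact intervalIntegral_comp_sub_mul_cos_add_eq_integral_indicator hg hR γ hφ₀_lower hφ₀_upper

/-- Lemma 1, Dirac-free formulation: change of variables from the
angle integral to the damping-density integral for a fixed polar angle `φ`. -/
theorem horizontal_damping_density_change_of_variables
    (Lx Ly Lz rx0 rx1 ry0 ry1 rz0 rz1 V Kx Ky Kz : ℝ)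
    (hLx : 0 < Lx) (hLy : 0 < Ly) (hLz : 0 < Lz)
    (hrx0 : rx0 ∈ Set.Ioo (0 : ℝ) 1) (hrx1 : rx1 ∈ Set.Ioo (0 : ℝ) 1)
    (hry0 : ry0 ∈ Set.Ioo (0 : ℝ) 1) (hry1 : ry1 ∈ Set.Ioo (0 : ℝ) 1)
    (hrz0 : rz0 ∈ Set.Ioo (0 : ℝ) 1) (hrz1 : rz1 ∈ Set.Ioo (0 : ℝ) 1)
    (hV : V = Lx * Ly * Lz)
    (hKx : Kx = Real.log (rx0 * rx1) / Lx)
    (hKy : Ky = Real.log (ry0 * ry1) / Ly)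
    (hKz : Kz = Real.log (rz0 * rz1) / Lz)
    (φ : ℝ) (hφ : φ ∈ Set.Ioc (0 : ℝ) (π / 2))
    (α β γ φ₀ : ℝ)
    (hα : α = Kx * Real.sin φ) (hβ : β = Ky * Real.sin φ) (hγ : γ = Kz * Real.cos φ)
    (hφ₀ : φ₀ = Real.arctan (-Ky / Kx))
    (Mφ : ℝ → ℝ)
    (hMφ : ∀ θ, Mφ θ = -Real.sqrt (α ^ 2 + β ^ 2) * Real.cos (θ + φ₀) + γ)
    (μφ : ℝ → ℝ)
    (hμφ : ∀ x, μφ x =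
      Set.indicator (Set.Icc (-Real.sqrt (α ^ 2 + β ^ 2)) β) (fun _ => (1 : ℝ)) x +
        Set.indicator (Set.Icc (-Real.sqrt (α ^ 2 + β ^ 2)) α) (fun _ => (1 : ℝ)) x)
    (hαβ : α ≠ β ∨ α < 0) :
    ∀ g : ℝ → ℝ, Continuous g →
      (∫ θ in (0 : ℝ)..(π / 2), g (Mφ θ)) =
        ∫ σ : ℝ, g σ * μφ (σ - γ) / Real.sqrt (α ^ 2 + β ^ 2 - (σ - γ) ^ 2) :=
  horizontal_damping_density_change_of_variables_general Lx Ly rx0 rx1 ry0 ry1 Kx Ky hLx hLy hrx0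
    hrx1 hry0 hry1 hKx hKy φ hφ α β γ φ₀ hα hβ hφ₀ Mφ hMφ μφ hμφ
end

section
/- Let Kx, Ky, Kz be negative real numbers. The image of the set {(a,b,c) ∈ ℝ³ : a ≥ 0, b ≥ 0, c ≥ 0, a² + b² + c² = 1} under the linear map (a,b,c) ↦ Kx·a + Ky·b + Kz·c is exactly the closed interval [−√(Kx²+Ky²+Kz²), max(Kx, Ky, Kz)]. In particular, the damping values M(θ,φ) of the shoebox room are confined to this interval, so the image-source model never produces a single exponential decay rate even when Kx = Ky = Kz. -/
/-!
The octant of the unit sphere is connected, being the radial projection of the convex simplex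
spanned by the unit vectors, so its image under a linear form is an interval. For nonpositive
weights the form is at most `max(Kx, Ky, Kz) · (a + b + c) ≤ max(Kx, Ky, Kz)`, with equality at
a unit vector, and by Cauchy–Schwarz at least `-√(Kx² + Ky² + Kz²)`, with equality at the unit
vector opposite to `(Kx, Ky, Kz)`, which lies in the octant.
-/

open Real Set

def sumSq (p : ℝ × ℝ × ℝ) : ℝ := p.1 ^ 2 + p.2.1 ^ 2 + p.2.2 ^ 2

def weightedSum (Kx Ky Kz : ℝ) (p : ℝ × ℝ × ℝ) : ℝ := Kx * p.1 + Ky * p.2.1 + Kz * p.2.2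

def octantSphere : Set (ℝ × ℝ × ℝ) := {p | 0 ≤ p.1 ∧ 0 ≤ p.2.1 ∧ 0 ≤ p.2.2 ∧ sumSq p = 1}

def octantSimplex : Set (ℝ × ℝ × ℝ) :=
  {p | 0 ≤ p.1 ∧ 0 ≤ p.2.1 ∧ 0 ≤ p.2.2 ∧ p.1 + p.2.1 + p.2.2 = 1}

noncomputable def radialProj (p : ℝ × ℝ × ℝ) : ℝ × ℝ × ℝ := (√(sumSq p))⁻¹ • p

lemma sumSq_smul (c : ℝ) (p : ℝ × ℝ × ℝ) : sumSq (c • p) = c ^ 2 * sumSq p := by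
  simp only [sumSq, Prod.smul_fst, Prod.smul_snd, smul_eq_mul]
  ring

lemma sumSq_radialProj {p : ℝ × ℝ × ℝ} (hp : sumSq p ≠ 0) : sumSq (radialProj p) = 1 := by
  have hpos : 0 < sumSq p := lt_of_le_of_ne (by unfold sumSq; positivity) hp.symm
  rw [radialProj, sumSq_smul, inv_pow, sq_sqrt hpos.le, inv_mul_cancel₀ hp]

lemma radialProj_smul {c : ℝ} (hc : 0 < c) (p : ℝ × ℝ × ℝ) : radialProj (c • p) = radialProj p := by
  rw [radialProj, radialProj, sumSq_smul, sqrt_mul (sq_nonneg c), sqrt_sq hc.le, smul_smul]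
  congr 1
  field_simp

lemma radialProj_of_sumSq_eq_one {p : ℝ × ℝ × ℝ} (hp : sumSq p = 1) : radialProj p = p := by
  rw [radialProj, hp, sqrt_one, inv_one, one_smul]

lemma convex_octantSimplex : Convex ℝ octantSimplex := by
  rintro ⟨a, b, c⟩ ⟨ha, hb, hc, h⟩ ⟨a', b', c'⟩ ⟨ha', hb', hc', h'⟩ s t hs ht hst
  simp only [octantSimplex, mem_ofPred_eq, Prod.smul_mk, Prod.mk_add_mk, smul_eq_mul] at *
  refine ⟨by positivity, by positivity, by positivity, ?_⟩
  linear_combination s * h + t * h' + hst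

lemma sumSq_pos_of_mem_octantSimplex {p : ℝ × ℝ × ℝ} (hp : p ∈ octantSimplex) : 0 < sumSq p := by
  obtain ⟨ha, hb, hc, h⟩ := hp
  unfold sumSq
  nlinarith [sq_nonneg (p.1 - p.2.1), sq_nonneg (p.1 - p.2.2), sq_nonneg (p.2.1 - p.2.2)]

lemma one_le_sum_of_mem_octantSphere {p : ℝ × ℝ × ℝ} (hp : p ∈ octantSphere) :
    1 ≤ p.1 + p.2.1 + p.2.2 := by
  obtain ⟨ha, hb, hc, h⟩ := hp
  unfold sumSq at h
  nlinarith [mul_nonneg ha hb, mul_nonneg ha hc, mul_nonneg hb hc]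

lemma radialProj_image_octantSimplex : radialProj '' octantSimplex = octantSphere := by
  apply Subset.antisymm
  · rintro _ ⟨p, hp, rfl⟩
    have hnonneg : 0 ≤ (√(sumSq p))⁻¹ := by positivity
    exact ⟨mul_nonneg hnonneg hp.1, mul_nonneg hnonneg hp.2.1, mul_nonneg hnonneg hp.2.2.1,
      sumSq_radialProj (sumSq_pos_of_mem_octantSimplex hp).ne'⟩
  · intro p hp
    set t := p.1 + p.2.1 + p.2.2
    have ht : 0 < t := zero_lt_one.trans_le (one_le_sum_of_mem_octantSphere hp)
    refine ⟨t⁻¹ • p, ?_, by rw [radialProj_smul (inv_pos.2 ht), radialProj_of_sumSq_eq_one hp.2.2.2]⟩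
    obtain ⟨ha, hb, hc, -⟩ := hp
    simp only [octantSimplex, mem_ofPred_eq, Prod.smul_fst, Prod.smul_snd, smul_eq_mul]
    refine ⟨by positivity, by positivity, by positivity, ?_⟩
    rw [← mul_add, ← mul_add, inv_mul_cancel₀ ht.ne']

lemma continuousOn_radialProj : ContinuousOn radialProj octantSimplex := by
  have hsqrt : ContinuousOn (fun p => (√(sumSq p))⁻¹) octantSimplex :=
    ContinuousOn.inv₀ (by unfold sumSq; fun_prop) fun p hp =>
      (sqrt_pos.2 (sumSq_pos_of_mem_octantSimplex hp)).ne'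
  exact hsqrt.smul continuousOn_id

lemma isPreconnected_octantSphere : IsPreconnected octantSphere := by
  rw [← radialProj_image_octantSimplex]
  exact convex_octantSimplex.isPreconnected.image _ continuousOn_radialProj

section

variable {Kx Ky Kz : ℝ}

lemma continuous_weightedSum : Continuous (weightedSum Kx Ky Kz) := by
  unfold weightedSum; fun_prop

lemma sq_weightedSum_le (p : ℝ × ℝ × ℝ) :
    weightedSum Kx Ky Kz p ^ 2 ≤ (Kx ^ 2 + Ky ^ 2 + Kz ^ 2) * sumSq p := by
  unfold weightedSum sumSq
  nlinarith [sq_nonneg (Kx * p.2.1 - Ky * p.1), sq_nonneg (Kx * p.2.2 - Kz * p.1),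
    sq_nonneg (Ky * p.2.2 - Kz * p.2.1)]

lemma neg_sqrt_le_weightedSum {p : ℝ × ℝ × ℝ} (hp : sumSq p = 1) :
    -√(Kx ^ 2 + Ky ^ 2 + Kz ^ 2) ≤ weightedSum Kx Ky Kz p :=
  neg_le_of_abs_le (abs_le_sqrt ((sq_weightedSum_le p).trans_eq (by rw [hp, mul_one])))

lemma weightedSum_le_max (hK : max (max Kx Ky) Kz ≤ 0) {p : ℝ × ℝ × ℝ} (hp : p ∈ octantSphere) :
    weightedSum Kx Ky Kz p ≤ max (max Kx Ky) Kz := by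
  obtain ⟨ha, hb, hc, -⟩ := id hp
  calc weightedSum Kx Ky Kz p
      ≤ max (max Kx Ky) Kz * p.1 + max (max Kx Ky) Kz * p.2.1 + max (max Kx Ky) Kz * p.2.2 := by
        unfold weightedSum; gcongr <;> simp
    _ = max (max Kx Ky) Kz * (p.1 + p.2.1 + p.2.2) := by ring
    _ ≤ max (max Kx Ky) Kz := mul_le_of_one_le_right hK (one_le_sum_of_mem_octantSphere hp)

lemma max_mem_image_weightedSum :
    max (max Kx Ky) Kz ∈ weightedSum Kx Ky Kz '' octantSphere := by
  rcases max_choice (max Kx Ky) Kz with h | h <;> [rcases max_choice Kx Ky with h' | h'; skip]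
  · exact ⟨(1, 0, 0), by norm_num [octantSphere, sumSq], by rw [h, h']; simp [weightedSum]⟩
  · exact ⟨(0, 1, 0), by norm_num [octantSphere, sumSq], by rw [h, h']; simp [weightedSum]⟩
  · exact ⟨(0, 0, 1), by norm_num [octantSphere, sumSq], by rw [h]; simp [weightedSum]⟩

lemma neg_sqrt_mem_image_weightedSum (hx : Kx ≤ 0) (hy : Ky ≤ 0) (hz : Kz ≤ 0)
    (hK : 0 < Kx ^ 2 + Ky ^ 2 + Kz ^ 2) :
    -√(Kx ^ 2 + Ky ^ 2 + Kz ^ 2) ∈ weightedSum Kx Ky Kz '' octantSphere := by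
  set r := √(Kx ^ 2 + Ky ^ 2 + Kz ^ 2)
  have hr : 0 < r := sqrt_pos.2 hK
  have hsumSq : sumSq (Kx, Ky, Kz) = r ^ 2 := (sq_sqrt hK.le).symm
  refine ⟨(-r⁻¹) • (Kx, Ky, Kz), ⟨?_, ?_, ?_, by rw [sumSq_smul, hsumSq]; field_simp⟩, ?_⟩
  all_goals simp only [Prod.smul_mk, smul_eq_mul]
  · exact mul_nonneg_of_nonpos_of_nonpos (by simp [hr.le]) hx
  · exact mul_nonneg_of_nonpos_of_nonpos (by simp [hr.le]) hy
  · exact mul_nonneg_of_nonpos_of_nonpos (by simp [hr.le]) hz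
  · calc weightedSum Kx Ky Kz (-r⁻¹ * Kx, -r⁻¹ * Ky, -r⁻¹ * Kz) = -r⁻¹ * sumSq (Kx, Ky, Kz) := by
          simp only [weightedSum, sumSq]; ring
      _ = -r := by rw [hsumSq]; field_simp

end

lemma spherical_mem_octantSphere (θ φ : ℝ) :
    (|cos θ * sin φ|, |sin θ * sin φ|, |cos φ|) ∈ octantSphere := by
  refine ⟨abs_nonneg _, abs_nonneg _, abs_nonneg _, ?_⟩
  simp only [sumSq, sq_abs]
  linear_combination sin φ ^ 2 * sin_sq_add_cos_sq θ + sin_sq_add_cos_sq φ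

/-- the image of the nonnegative octant of the unit sphere under
`(a,b,c) ↦ Kx·a + Ky·b + Kz·c` is exactly `[−√(Kx²+Ky²+Kz²), max(Kx,Ky,Kz)]`;
in particular all damping values `M(θ,φ)` lie in this interval. -/
theorem damping_values_range (Kx Ky Kz : ℝ) (hKx : Kx < 0) (hKy : Ky < 0) (hKz : Kz < 0) :
    (fun p : ℝ × ℝ × ℝ => Kx * p.1 + Ky * p.2.1 + Kz * p.2.2) ''
        {p : ℝ × ℝ × ℝ | 0 ≤ p.1 ∧ 0 ≤ p.2.1 ∧ 0 ≤ p.2.2 ∧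
          p.1 ^ 2 + p.2.1 ^ 2 + p.2.2 ^ 2 = 1} =
      Set.Icc (-Real.sqrt (Kx ^ 2 + Ky ^ 2 + Kz ^ 2)) (max (max Kx Ky) Kz) ∧
    ∀ θ φ : ℝ,
      Kx * |Real.cos θ * Real.sin φ| + Ky * |Real.sin θ * Real.sin φ| +
          Kz * |Real.cos φ| ∈
        Set.Icc (-Real.sqrt (Kx ^ 2 + Ky ^ 2 + Kz ^ 2)) (max (max Kx Ky) Kz) := by
  have hmax : max (max Kx Ky) Kz ≤ 0 := max_le (max_le hKx.le hKy.le) hKz.le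
  have hK : 0 < Kx ^ 2 + Ky ^ 2 + Kz ^ 2 := by
    linarith [sq_pos_of_neg hKx, sq_nonneg Ky, sq_nonneg Kz]
  have himage : weightedSum Kx Ky Kz '' octantSphere =
      Icc (-√(Kx ^ 2 + Ky ^ 2 + Kz ^ 2)) (max (max Kx Ky) Kz) := by
    refine Subset.antisymm ?_ ?_
    · rintro _ ⟨p, hp, rfl⟩
      exact ⟨neg_sqrt_le_weightedSum hp.2.2.2, weightedSum_le_max hmax hp⟩
    · exact (isPreconnected_octantSphere.image _ continuous_weightedSum.continuousOn).Icc_subset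
        (neg_sqrt_mem_image_weightedSum hKx.le hKy.le hKz.le hK) max_mem_image_weightedSum
  refine ⟨himage, fun θ φ => ?_⟩
  rw [← himage]
  exact mem_image_of_mem _ (spherical_mem_octantSphere θ φ)
end

section
/- For every continuous function g : ℝ → ℝ, the spherical integral of g composed with M reduces to one octant: ∫_{0}^{π} ∫_{0}^{2π} g(M(θ,φ))·sin φ dθ dφ = 8 · ∫_{0}^{π/2} ∫_{0}^{π/2} g(M(θ,φ))·sin φ dθ dφ. -/
open Real Set intervalIntegral

/-- the spherical integral of `g ∘ M` weighted by `sin φ` reduces to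
eight times the integral over one octant. -/
theorem spherical_integral_octant_symmetry
    (Lx Ly Lz rx0 rx1 ry0 ry1 rz0 rz1 V Kx Ky Kz : ℝ)
    (hLx : 0 < Lx) (hLy : 0 < Ly) (hLz : 0 < Lz)
    (hrx0 : rx0 ∈ Set.Ioo (0 : ℝ) 1) (hrx1 : rx1 ∈ Set.Ioo (0 : ℝ) 1)
    (hry0 : ry0 ∈ Set.Ioo (0 : ℝ) 1) (hry1 : ry1 ∈ Set.Ioo (0 : ℝ) 1)
    (hrz0 : rz0 ∈ Set.Ioo (0 : ℝ) 1) (hrz1 : rz1 ∈ Set.Ioo (0 : ℝ) 1)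
    (hV : V = Lx * Ly * Lz)
    (hKx : Kx = Real.log (rx0 * rx1) / Lx)
    (hKy : Ky = Real.log (ry0 * ry1) / Ly)
    (hKz : Kz = Real.log (rz0 * rz1) / Lz) :
    ∀ g : ℝ → ℝ, Continuous g →
      (∫ φ in (0 : ℝ)..π, ∫ θ in (0 : ℝ)..(2 * π),
          g (Kx * |Real.cos θ * Real.sin φ| + Ky * |Real.sin θ * Real.sin φ| +
            Kz * |Real.cos φ|) * Real.sin φ) =
        8 * ∫ φ in (0 : ℝ)..(π / 2), ∫ θ in (0 : ℝ)..(π / 2),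
          g (Kx * |Real.cos θ * Real.sin φ| + Ky * |Real.sin θ * Real.sin φ| +
            Kz * |Real.cos φ|) * Real.sin φ := by
  intro g hg
  set f : ℝ → ℝ → ℝ := fun φ θ =>
    g (Kx * |Real.cos θ * Real.sin φ| + Ky * |Real.sin θ * Real.sin φ| +
      Kz * |Real.cos φ|) * Real.sin φ with hf
  have hcont : Continuous (Function.uncurry f) := by
    apply Continuous.mul
    · apply hg.comp
      fun_prop
    · fun_prop
  have hcφ : ∀ φ, Continuous (f φ) := by
    intro φ
    exact (hg.comp (by fun_prop)).mul continuous_const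
  -- symmetry facts
  have hsym1 : ∀ φ θ, f φ (π - θ) = f φ θ := by
    intro φ θ
    simp [hf, Real.cos_pi_sub, Real.sin_pi_sub, abs_mul, abs_neg]
  have hsym2 : ∀ φ θ, f φ (θ + π) = f φ θ := by
    intro φ θ
    simp [hf, Real.cos_add_pi, Real.sin_add_pi, abs_mul, abs_neg]
  have hsymφ : ∀ φ θ, f (π - φ) θ = f φ θ := by
    intro φ θ
    simp [hf, Real.cos_pi_sub, Real.sin_pi_sub, abs_mul, abs_neg]
  -- inner reduction
  have inner : ∀ φ, (∫ θ in (0:ℝ)..(2*π), f φ θ) = 4 * ∫ θ in (0:ℝ)..(π/2), f φ θ := by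
    intro φ
    have hI : ∀ a b : ℝ, IntervalIntegrable (f φ) MeasureTheory.volume a b :=
      fun a b => (hcφ φ).intervalIntegrable a b
    have h1 : (∫ θ in (π/2:ℝ)..π, f φ θ) = ∫ θ in (0:ℝ)..(π/2), f φ θ := by
      have := intervalIntegral.integral_comp_sub_left (a := 0) (b := π/2) (f φ) π
      simp only [hsym1] at this
      rw [this, show π - π/2 = π/2 by ring, sub_zero]
    have h2 : (∫ θ in (π:ℝ)..(2*π), f φ θ) = ∫ θ in (0:ℝ)..π, f φ θ := by
      have := intervalIntegral.integral_comp_add_right (a := 0) (b := π) (f φ) π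
      simp only [hsym2] at this
      rw [this, zero_add, show π + π = 2*π by ring]
    have hhalf : (∫ θ in (0:ℝ)..π, f φ θ) = 2 * ∫ θ in (0:ℝ)..(π/2), f φ θ := by
      rw [← intervalIntegral.integral_add_adjacent_intervals (hI 0 (π/2)) (hI (π/2) π), h1]
      ring
    rw [← intervalIntegral.integral_add_adjacent_intervals (hI 0 π) (hI π (2*π)), h2, hhalf]
    ring
  -- outer function
  set F : ℝ → ℝ := fun φ => ∫ θ in (0:ℝ)..(π/2), f φ θ with hF
  have hFc : Continuous F :=
    intervalIntegral.continuous_parametric_intervalIntegral_of_continuous' hcont 0 (π/2)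
  have hFsym : ∀ φ, F (π - φ) = F φ := by
    intro φ
    simp only [hF]
    congr 1
    ext θ
    exact hsymφ φ θ
  have houter : (∫ φ in (0:ℝ)..π, F φ) = 2 * ∫ φ in (0:ℝ)..(π/2), F φ := by
    have h1 : (∫ φ in (π/2:ℝ)..π, F φ) = ∫ φ in (0:ℝ)..(π/2), F φ := by
      have := intervalIntegral.integral_comp_sub_left (a := 0) (b := π/2) F π
      simp only [hFsym] at this
      rw [this, show π - π/2 = π/2 by ring, sub_zero]
    rw [← intervalIntegral.integral_add_adjacent_intervals
      (hFc.intervalIntegrable 0 (π/2)) (hFc.intervalIntegrable (π/2) π), h1]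
    ring
  calc (∫ φ in (0:ℝ)..π, ∫ θ in (0:ℝ)..(2*π), f φ θ)
      = ∫ φ in (0:ℝ)..π, 4 * F φ := by
        apply intervalIntegral.integral_congr
        intro φ _
        exact inner φ
    _ = 4 * ∫ φ in (0:ℝ)..π, F φ := intervalIntegral.integral_const_mul 4 F
    _ = 8 * ∫ φ in (0:ℝ)..(π/2), F φ := by rw [houter]; ring
end
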